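/- arXiv:2512.18810 — 10 statements merged into one kernel-verified Lean document; each statement's English description precedes it below -/
import Mathlib

section
/- Let (p_i, q_i) for i in Z and (r_j, s_j) for j in Z be two sequences of integer pairs with p_i*q_{i+1} - q_i*p_{i+1} = 1 and r_j*s_{j+1} - s_j*r_{j+1} = 1 for all i, j. Define u_{i,j} = p_i*s_j - q_i*r_j. Then for all i, j, u_{i,j}*u_{i+1,j+1} - u_{i,j+1}*u_{i+1,j} = 1, i.e., (u_{i,j}) is an SL_2-tiling. -/
/-- The three-term Plücker relation `ω(a,c) ω(b,d) - ω(a,d) ω(b,c) = ω(a,b) ω(c,d)`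
for `ω(x,y) = x₁ y₂ - x₂ y₁`, with `a = (p,q)`, `b = (p',q')`, `c = (r,s)`, `d = (r',s')`. -/
theorem plucker_relation {R : Type*} [CommRing R] (p q p' q' r s r' s' : R) :
    (p * s - q * r) * (p' * s' - q' * r') - (p * s' - q * r') * (p' * s - q' * r) =
      (p * q' - q * p') * (r * s' - s * r') := by
  ring

/-- Short's construction: a pair of Farey paths yields an SL₂-tiling. -/
theorem sl2_tiling_from_farey_paths (p q r s : ℤ → ℤ)
    (hp : ∀ i : ℤ, p i * q (i + 1) - q i * p (i + 1) = 1)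
    (hr : ∀ j : ℤ, r j * s (j + 1) - s j * r (j + 1) = 1)
    (u : ℤ → ℤ → ℤ) (hu : ∀ i j : ℤ, u i j = p i * s j - q i * r j) :
    ∀ i j : ℤ, u i j * u (i + 1) (j + 1) - u i (j + 1) * u (i + 1) j = 1 := by
  intro i j
  rw [hu, hu, hu, hu, plucker_relation, hp, hr, one_mul]
end

section
/- Every positive integral SL_2-tiling is tame: if u_{i,j} > 0 are integers with u_{i,j}*u_{i+1,j+1} - u_{i,j+1}*u_{i+1,j} = 1 for all i,j in Z, then every adjacent 3x3 determinant of the matrix (u_{i,j}) vanishes. -/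
/-!
Dodgson condensation multiplies an adjacent 3×3 minor by its central entry and obtains a
combination of the four adjacent 2×2 minors that vanishes when they are all equal to 1; the central
entry is positive, so it can be cancelled.
-/

/-- Dodgson condensation (Desnanot–Jacobi) for a 3×3 matrix `!![a, b, c; d, e, f; g, h, k]`. -/
theorem dodgson_condensation_three {R : Type*} [CommRing R] (a b c d e f g h k : R) :
    (a * (e * k - f * h) - b * (d * k - f * g) + c * (d * h - e * g)) * e
      = (a * e - b * d) * (e * k - f * h) - (b * f - c * e) * (d * h - e * g) := by
  ring

theorem det_three_eq_zero_of_adjacent_minors_eq_one {R : Type*} [CommRing R] [NoZeroDivisors R]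
    {a b c d e f g h k : R} (he : e ≠ 0)
    (htl : a * e - b * d = 1) (hbr : e * k - f * h = 1)
    (htr : b * f - c * e = 1) (hbl : d * h - e * g = 1) :
    a * (e * k - f * h) - b * (d * k - f * g) + c * (d * h - e * g) = 0 := by
  refine (mul_eq_zero.mp ?_).resolve_right he
  rw [dodgson_condensation_three, htl, hbr, htr, hbl, sub_self]

/-- Every positive integral SL₂-tiling is tame. -/
theorem positive_sl2_tiling_tame (u : ℤ → ℤ → ℤ)
    (hpos : ∀ i j : ℤ, 0 < u i j)
    (hsl2 : ∀ i j : ℤ, u i j * u (i + 1) (j + 1) - u i (j + 1) * u (i + 1) j = 1) :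
    ∀ i j : ℤ,
      u i j * (u (i + 1) (j + 1) * u (i + 2) (j + 2) - u (i + 1) (j + 2) * u (i + 2) (j + 1))
        - u i (j + 1) * (u (i + 1) j * u (i + 2) (j + 2) - u (i + 1) (j + 2) * u (i + 2) j)
        + u i (j + 2) * (u (i + 1) j * u (i + 2) (j + 1) - u (i + 1) (j + 1) * u (i + 2) j)
      = 0 := by
  intro i j
  have add_one_add_one : ∀ n : ℤ, n + 1 + 1 = n + 2 := fun n => by ring
  apply det_three_eq_zero_of_adjacent_minors_eq_one (hpos (i + 1) (j + 1)).ne'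
  · exact hsl2 i j
  · simpa only [add_one_add_one] using hsl2 (i + 1) (j + 1)
  · simpa only [add_one_add_one] using hsl2 i (j + 1)
  · simpa only [add_one_add_one] using hsl2 (i + 1) j
end

section
/- In a positive integral SL_2-tiling, for every i,j the entry u_{i,j} divides u_{i-1,j} + u_{i+1,j}, and u_{i,j} divides u_{i,j-1} + u_{i,j+1}. -/
/-!
Subtracting the two adjacent minors that share the entries `c = u i j` and `d = u i (j+1)` gives
`d * (u (i-1) j + u (i+1) j) = c * (u (i-1) (j+1) + u (i+1) (j+1))`, while either minor exhibits
`c` and `d` as coprime; hence `c` divides the sum of its vertical neighbours. Transposing the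
tiling gives the horizontal statement.
-/

def IsSL2Tiling {R : Type*} [CommRing R] (u : ℤ → ℤ → R) : Prop :=
  ∀ i j : ℤ, u i j * u (i + 1) (j + 1) - u i (j + 1) * u (i + 1) j = 1

theorem dvd_add_of_minors_eq_one {R : Type*} [CommRing R] {a b c d e f : R}
    (hup : a * d - b * c = 1) (hdown : c * f - d * e = 1) : c ∣ a + e := by
  have hcop : IsCoprime c d := ⟨f, -e, by linear_combination hdown⟩
  exact hcop.dvd_of_dvd_mul_left ⟨b + f, by linear_combination hup - hdown⟩

namespace IsSL2Tiling

variable {R : Type*} [CommRing R] {u : ℤ → ℤ → R}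

theorem transpose (hu : IsSL2Tiling u) : IsSL2Tiling fun i j => u j i := fun i j => by
  linear_combination hu j i

theorem dvd_add_vertical (hu : IsSL2Tiling u) (i j : ℤ) :
    u i j ∣ u (i - 1) j + u (i + 1) j := by
  have hup := hu (i - 1) j
  rw [sub_add_cancel] at hup
  exact dvd_add_of_minors_eq_one hup (hu i j)

theorem dvd_add_horizontal (hu : IsSL2Tiling u) (i j : ℤ) :
    u i j ∣ u i (j - 1) + u i (j + 1) :=
  hu.transpose.dvd_add_vertical j i

end IsSL2Tiling

theorem sl2_tiling_divisibility_general (u : ℤ → ℤ → ℤ)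
    (hsl2 : ∀ i j : ℤ, u i j * u (i + 1) (j + 1) - u i (j + 1) * u (i + 1) j = 1) :
    ∀ i j : ℤ, u i j ∣ (u (i - 1) j + u (i + 1) j) ∧ u i j ∣ (u i (j - 1) + u i (j + 1)) :=
  fun i j => ⟨IsSL2Tiling.dvd_add_vertical hsl2 i j, IsSL2Tiling.dvd_add_horizontal hsl2 i j⟩

/-- In a positive integral SL₂-tiling, each entry divides the sum of its vertical
neighbours and the sum of its horizontal neighbours. -/
theorem sl2_tiling_divisibility (u : ℤ → ℤ → ℤ)
    (hpos : ∀ i j : ℤ, 0 < u i j)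
    (hsl2 : ∀ i j : ℤ, u i j * u (i + 1) (j + 1) - u i (j + 1) * u (i + 1) j = 1) :
    ∀ i j : ℤ, u i j ∣ (u (i - 1) j + u (i + 1) j) ∧ u i j ∣ (u i (j - 1) + u i (j + 1)) :=
  sl2_tiling_divisibility_general u hsl2
end

section
/- There is no bi-infinite matrix (u_{i,j})_{i,j in Z} of positive integers with all adjacent 2x2 minors equal to 1 satisfying u_{i,j} = u_{i+m,j} for all i,j, where m is a positive integer. -/
/-!
The determinant condition on two adjacent rows says exactly that the ratio of two adjacent
entries of a row strictly increases from one row to the next (when the entries are positive),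
so such a ratio cannot be periodic in the row index.
-/

theorem strictMono_row_ratio_of_adjacent_minor_eq_one {K : Type*} [Field K] [LinearOrder K]
    [IsStrictOrderedRing K] (u : ℤ → ℤ → K) (j : ℤ) (hpos : ∀ i, 0 < u i j)
    (hdet : ∀ i, u i j * u (i + 1) (j + 1) - u i (j + 1) * u (i + 1) j = 1) :
    StrictMono fun i => u i (j + 1) / u i j := by
  refine strictMono_int_of_lt_succ fun i => ?_
  rw [div_lt_div_iff₀ (hpos i) (hpos (i + 1))]
  linarith [hdet i]

/-- No positive integral SL₂-tiling has a purely vertical translational symmetry. -/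
theorem no_vertical_periodic_sl2_tiling (m : ℤ) (hm : 0 < m) :
    ¬ ∃ u : ℤ → ℤ → ℤ,
      (∀ i j : ℤ, 0 < u i j) ∧
      (∀ i j : ℤ, u i j * u (i + 1) (j + 1) - u i (j + 1) * u (i + 1) j = 1) ∧
      (∀ i j : ℤ, u i j = u (i + m) j) := by
  rintro ⟨u, hpos, hdet, hper⟩
  have hmono := strictMono_row_ratio_of_adjacent_minor_eq_one (fun i j => (u i j : ℚ)) 0
    (fun i => by exact_mod_cast hpos i 0) (fun i => by exact_mod_cast hdet i 0)
  have hlt := hmono (lt_add_of_pos_right 0 hm)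
  simp only [← hper] at hlt
  exact lt_irrefl _ hlt
end

section
/- There is no bi-infinite matrix (u_{i,j})_{i,j in Z} of positive integers with all adjacent 2x2 minors equal to 1 satisfying u_{i,j} = u_{i,j+n} for all i,j, where n is a positive integer. -/
/-!
In two consecutive rows `a = u i`, `b = u (i + 1)` of a positive SL₂-tiling, the adjacent minors
`a j * b (j + 1) - a (j + 1) * b j = 1` say that the ratio `a j / b j` strictly decreases in `j`.
A strictly decreasing sequence cannot be periodic.
-/

section CrossProduct

variable {R : Type*} [CommRing R] [LinearOrder R] [IsStrictOrderedRing R]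

theorem mul_sub_mul_pos_trans {a₁ a₂ a₃ b₁ b₂ b₃ : R} (hb₁ : 0 < b₁) (hb₂ : 0 < b₂)
    (hb₃ : 0 < b₃) (h₁₂ : 0 < a₁ * b₂ - a₂ * b₁) (h₂₃ : 0 < a₂ * b₃ - a₃ * b₂) :
    0 < a₁ * b₃ - a₃ * b₁ := by
  have key : b₂ * (a₁ * b₃ - a₃ * b₁) = b₃ * (a₁ * b₂ - a₂ * b₁) + b₁ * (a₂ * b₃ - a₃ * b₂) := by
    ring
  have : 0 < b₂ * (a₁ * b₃ - a₃ * b₁) := by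
    rw [key]
    positivity
  exact pos_of_mul_pos_right this hb₂.le

theorem mul_sub_mul_pos_of_lt {a b : ℤ → R} (hb : ∀ j, 0 < b j)
    (hadj : ∀ j, 0 < a j * b (j + 1) - a (j + 1) * b j) {k m : ℤ} (hkm : k < m) :
    0 < a k * b m - a m * b k := by
  rw [← Int.add_one_le_iff] at hkm
  induction m, hkm using Int.leInduction with
  | base => exact hadj k
  | succ m _ ih => exact mul_sub_mul_pos_trans (hb k) (hb m) (hb (m + 1)) ih (hadj m)

end CrossProduct

/-- No positive integral SL₂-tiling is periodic purely in the column direction. -/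
theorem no_horizontal_periodic_sl2_tiling (n : ℤ) (hn : 0 < n) :
    ¬ ∃ u : ℤ → ℤ → ℤ,
      (∀ i j : ℤ, 0 < u i j) ∧
      (∀ i j : ℤ, u i j * u (i + 1) (j + 1) - u i (j + 1) * u (i + 1) j = 1) ∧
      (∀ i j : ℤ, u i j = u i (j + n)) := by
  rintro ⟨u, hpos, hdet, hper⟩
  have hdecr : 0 < u 0 0 * u 1 n - u 0 n * u 1 0 :=
    mul_sub_mul_pos_of_lt (hpos 1) (fun j => (hdet 0 j).symm ▸ one_pos) hn
  have h₀ : u 0 n = u 0 0 := by simpa using (hper 0 0).symm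
  have h₁ : u 1 n = u 1 0 := by simpa using (hper 1 0).symm
  rw [h₀, h₁, mul_comm, sub_self] at hdecr
  exact lt_irrefl 0 hdecr
end

section
/- If a positive integral SL_2-tiling admits two Z-linearly independent translational symmetries (i.e., u_{i,j} = u_{i+m1,j+n1} and u_{i,j} = u_{i+m2,j+n2} for all i,j, with (m1,n1) and (m2,n2) linearly independent over Z), then a contradiction follows; hence no positive integral SL_2-tiling has two independent translational symmetries. -/
/-! Each SL₂ relation says that the column ratio `u i (j + 1) / u i j` strictly increases with
the row index `i`, so no positive tiling is periodic in the row direction alone. Two independent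
periods `(m₁, n₁)`, `(m₂, n₂)` combine to the row period `n₂ • (m₁, n₁) - n₁ • (m₂, n₂)
= (m₁ n₂ - m₂ n₁, 0)`, hence `m₁ n₂ - m₂ n₁ = 0`. -/

theorem strictMono_column_ratio {K : Type*} [Field K] [LinearOrder K] [IsStrictOrderedRing K]
    (u : ℤ → ℤ → K) (hpos : ∀ i j : ℤ, 0 < u i j)
    (hdet : ∀ i j : ℤ, 0 < u i j * u (i + 1) (j + 1) - u i (j + 1) * u (i + 1) j) (j : ℤ) :
    StrictMono fun i => u i (j + 1) / u i j :=
  strictMono_int_of_lt_succ fun i => by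
    rw [div_lt_div_iff₀ (hpos i j) (hpos (i + 1) j)]
    linarith [hdet i j]

theorem eq_zero_of_row_period {K : Type*} [Field K] [LinearOrder K] [IsStrictOrderedRing K]
    (u : ℤ → ℤ → K) (hpos : ∀ i j : ℤ, 0 < u i j)
    (hdet : ∀ i j : ℤ, 0 < u i j * u (i + 1) (j + 1) - u i (j + 1) * u (i + 1) j)
    (d : ℤ) (hd : ∀ i j : ℤ, u (i + d) j = u i j) : d = 0 := by
  simpa using (strictMono_column_ratio u hpos hdet 0).injective (a₁ := 0 + d) (a₂ := 0)
    (by simp only [hd])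

theorem Function.Periodic.det_period {α : Type*} {f : ℤ × ℤ → α} {m₁ n₁ m₂ n₂ : ℤ}
    (h₁ : Periodic f (m₁, n₁)) (h₂ : Periodic f (m₂, n₂)) :
    Periodic f (m₁ * n₂ - m₂ * n₁, 0) := by
  have e : ((m₁ * n₂ - m₂ * n₁, 0) : ℤ × ℤ) = n₂ • (m₁, n₁) - n₁ • (m₂, n₂) := by
    ext <;> simp only [Prod.fst_sub, Prod.snd_sub, Prod.smul_fst, Prod.smul_snd, smul_eq_mul] <;>
      ring
  exact e ▸ (h₁.zsmul n₂).sub_period (h₂.zsmul n₁)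

/-- No positive integral SL₂-tiling has two ℤ-linearly independent translational
symmetries. -/
theorem no_two_independent_symmetries (u : ℤ → ℤ → ℤ)
    (hpos : ∀ i j : ℤ, 0 < u i j)
    (hsl2 : ∀ i j : ℤ, u i j * u (i + 1) (j + 1) - u i (j + 1) * u (i + 1) j = 1)
    (m1 n1 m2 n2 : ℤ)
    (h1 : ∀ i j : ℤ, u i j = u (i + m1) (j + n1))
    (h2 : ∀ i j : ℤ, u i j = u (i + m2) (j + n2))
    (hindep : m1 * n2 - m2 * n1 ≠ 0) :
    False := by
  have hrow : Function.Periodic (fun p : ℤ × ℤ => u p.1 p.2) (m1 * n2 - m2 * n1, 0) :=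
    Function.Periodic.det_period (fun p => (h1 p.1 p.2).symm) (fun p => (h2 p.1 p.2).symm)
  have hposℚ : ∀ i j : ℤ, (0 : ℚ) < u i j := fun i j => mod_cast hpos i j
  have hdetℚ : ∀ i j : ℤ,
      (0 : ℚ) < u i j * u (i + 1) (j + 1) - u i (j + 1) * u (i + 1) j := fun i j => by
    exact_mod_cast (hsl2 i j).symm ▸ one_pos
  have hrowℚ : ∀ i j : ℤ, (u (i + (m1 * n2 - m2 * n1)) j : ℚ) = u i j := fun i j => by
    simpa using congrArg (Int.cast : ℤ → ℚ) (hrow (i, j))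
  exact hindep (eq_zero_of_row_period (fun i j => (u i j : ℚ)) hposℚ hdetℚ _ hrowℚ)
end

section
/- Let u_{i,j} be a tame positive integral SL_2-tiling that is (m,n)-periodic: u_{i,j} = u_{i+m,j+n} for all i,j, with m,n positive integers. Then the quantity (u_{i+m,j} + u_{i,j+n}) / u_{i,j} is a positive integer independent of i and j. -/
/-!
Two sequences with Wronskian identically `1` solve a common discrete Hill equation
`x (j + 2) = a j * x (j + 1) - x j`. Neighbouring rows of an `SL₂`-tiling have unit Wronskian, and
a Hill equation is determined by any nowhere-vanishing solution, so all rows of the tiling solve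
the same equation and the Wronskian `W(i, k)` of rows `i` and `k` is constant. Put
`w i j = u (i + m) j + u i (j + n)`. By periodicity the Wronskian of row `i` with row `i` of `w` is
`W(i, i + m)(j) - W(i, i + m)(j + n) = 0`, so the two rows are proportional; by the symmetry
`i ↔ j` the columns of `w` and `u` are proportional too, hence `w = c • u` for a rational `c`.
Evaluating on the unimodular `2 × 2` block at the origin gives `c = w₀₀ u₁₁ - w₀₁ u₁₀ ∈ ℤ`.
-/

lemma Function.Periodic.eq_apply_zero {α : Type*} {f : ℤ → α} (h : Function.Periodic f 1)
    (j : ℤ) : f j = f 0 := by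
  simpa using h.int_mul_eq j

def wronskian (x y : ℤ → ℤ) (j : ℤ) : ℤ := x j * y (j + 1) - x (j + 1) * y j

def IsHillSolution (a x : ℤ → ℤ) : Prop := ∀ j, x (j + 2) = a j * x (j + 1) - x j

section Hill

variable {a b x y : ℤ → ℤ}

lemma isHillSolution_of_wronskian_eq_one (hxy : ∀ j, wronskian x y j = 1) :
    IsHillSolution (fun j => x j * y (j + 2) - x (j + 2) * y j) x ∧
      IsHillSolution (fun j => x j * y (j + 2) - x (j + 2) * y j) y := by
  have h₀ (j : ℤ) : x j * y (j + 1) - x (j + 1) * y j = 1 := hxy j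
  have h₁ (j : ℤ) : x (j + 1) * y (j + 2) - x (j + 2) * y (j + 1) = 1 := by
    simpa only [wronskian, add_assoc, one_add_one_eq_two] using hxy (j + 1)
  refine ⟨fun j => ?_, fun j => ?_⟩
  · linear_combination (-x (j + 2)) * h₀ j - x j * h₁ j
  · linear_combination (-y (j + 2)) * h₀ j - y j * h₁ j

lemma IsHillSolution.coeff_eq (ha : IsHillSolution a x) (hb : IsHillSolution b x)
    (hx : ∀ j, x j ≠ 0) : a = b := by
  funext j
  exact mul_right_cancel₀ (hx (j + 1)) (by linarith [ha j, hb j])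

lemma IsHillSolution.wronskian_succ (hx : IsHillSolution a x) (hy : IsHillSolution a y) (j : ℤ) :
    wronskian x y (j + 1) = wronskian x y j := by
  simp only [wronskian, add_assoc, one_add_one_eq_two, hx j, hy j]
  ring

lemma IsHillSolution.wronskian_eq (hx : IsHillSolution a x) (hy : IsHillSolution a y) (j k : ℤ) :
    wronskian x y j = wronskian x y k := by
  have hper : Function.Periodic (wronskian x y) 1 := hx.wronskian_succ hy
  rw [hper.eq_apply_zero j, hper.eq_apply_zero k]

end Hill

section Tiling

variable {u : ℤ → ℤ → ℤ}

lemma exists_forall_isHillSolution (hne : ∀ i j, u i j ≠ 0)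
    (hsl2 : ∀ i j, wronskian (u i) (u (i + 1)) j = 1) : ∃ a, ∀ i, IsHillSolution a (u i) := by
  set c : ℤ → ℤ → ℤ := fun i j => u i j * u (i + 1) (j + 2) - u i (j + 2) * u (i + 1) j
  have hc (i : ℤ) : IsHillSolution (c i) (u i) ∧ IsHillSolution (c i) (u (i + 1)) :=
    isHillSolution_of_wronskian_eq_one (hsl2 i)
  have hper : Function.Periodic c 1 := fun i => (hc (i + 1)).1.coeff_eq (hc i).2 (hne (i + 1))
  exact ⟨c 0, fun i => hper.eq_apply_zero i ▸ (hc i).1⟩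

lemma row_cross_mul_eq (hne : ∀ i j, u i j ≠ 0) (hsl2 : ∀ i j, wronskian (u i) (u (i + 1)) j = 1)
    {m n : ℤ} (hper : ∀ i j, u i j = u (i + m) (j + n)) (i j : ℤ) :
    u i j * (u (i + m) (j + 1) + u i (j + 1 + n)) = u i (j + 1) * (u (i + m) j + u i (j + n)) := by
  obtain ⟨a, ha⟩ := exists_forall_isHillSolution hne hsl2
  have hW := (ha i).wronskian_eq (ha (i + m)) (j + n) j
  simp only [wronskian, add_right_comm j n 1] at hW
  linear_combination -hW + u i (j + 1 + n) * hper i j - u i (j + n) * hper i (j + 1)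

lemma exists_eq_mul_of_cross_mul_eq {w : ℤ → ℤ → ℤ} (hne : ∀ i j, u i j ≠ 0)
    (hdet : u 0 0 * u 1 1 - u 0 1 * u 1 0 = 1)
    (hrow : ∀ i j, u i j * w i (j + 1) = u i (j + 1) * w i j)
    (hcol : ∀ i j, u i j * w (i + 1) j = u (i + 1) j * w i j) :
    ∃ g : ℤ, ∀ i j, w i j = g * u i j := by
  set r : ℤ → ℤ → ℚ := fun i j => w i j / u i j
  have hne' (i j : ℤ) : (u i j : ℚ) ≠ 0 := Int.cast_ne_zero.mpr (hne i j)
  have hr_row (i : ℤ) : Function.Periodic (r i) 1 := fun j => by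
    simp only [r]
    rw [div_eq_div_iff (hne' _ _) (hne' _ _)]
    exact_mod_cast by linear_combination hrow i j
  have hr_col : Function.Periodic (fun i => r i 0) 1 := fun i => by
    simp only [r]
    rw [div_eq_div_iff (hne' _ _) (hne' _ _)]
    exact_mod_cast by linear_combination hcol i 0
  have hw (i j : ℤ) : (w i j : ℚ) = r 0 0 * u i j := by
    rw [← hr_col.eq_apply_zero i, ← (hr_row i).eq_apply_zero j]
    exact (div_mul_cancel₀ _ (hne' i j)).symm
  have hg : ((w 0 0 * u 1 1 - w 0 1 * u 1 0 : ℤ) : ℚ) = r 0 0 := by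
    push_cast
    rw [hw 0 0, hw 0 1]
    linear_combination r 0 0 * (by exact_mod_cast hdet : (u 0 0 : ℚ) * u 1 1 - u 0 1 * u 1 0 = 1)
  refine ⟨w 0 0 * u 1 1 - w 0 1 * u 1 0, fun i j => ?_⟩
  exact_mod_cast hg ▸ hw i j

end Tiling

theorem sl2_tiling_growth_general (u : ℤ → ℤ → ℤ) (m n : ℤ)
    (hpos : ∀ i j : ℤ, 0 < u i j)
    (hsl2 : ∀ i j : ℤ, u i j * u (i + 1) (j + 1) - u i (j + 1) * u (i + 1) j = 1)
    (hper : ∀ i j : ℤ, u i j = u (i + m) (j + n)) :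
    ∃ g : ℤ, 0 < g ∧ ∀ i j : ℤ, u (i + m) j + u i (j + n) = g * u i j := by
  have hne (i j : ℤ) : u i j ≠ 0 := (hpos i j).ne'
  have hcol (i j : ℤ) :
      u i j * (u (i + 1 + m) j + u (i + 1) (j + n)) = u (i + 1) j * (u (i + m) j + u i (j + n)) := by
    have h := row_cross_mul_eq (u := Function.swap u) (fun i j => hne j i)
      (fun i j => by simp only [wronskian, Function.swap]; linear_combination hsl2 j i)
      (fun i j => hper j i) j i
    simp only [Function.swap] at h
    linear_combination h
  obtain ⟨g, hg⟩ := exists_eq_mul_of_cross_mul_eq (w := fun i j => u (i + m) j + u i (j + n)) hne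
    (by simpa using hsl2 0 0) (row_cross_mul_eq hne hsl2 hper) hcol
  exact ⟨g, pos_of_mul_pos_left (hg 0 0 ▸ add_pos (hpos _ _) (hpos _ _)) (hpos 0 0).le, hg⟩

/-- The growth coefficient of an (m,n)-periodic tame positive integral SL₂-tiling:
(u_{i+m,j} + u_{i,j+n}) / u_{i,j} is a positive integer independent of i and j. -/
theorem sl2_tiling_growth (u : ℤ → ℤ → ℤ) (m n : ℤ) (hm : 0 < m) (hn : 0 < n)
    (hpos : ∀ i j : ℤ, 0 < u i j)
    (hsl2 : ∀ i j : ℤ, u i j * u (i + 1) (j + 1) - u i (j + 1) * u (i + 1) j = 1)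
    (htame : ∀ i j : ℤ,
      u i j * (u (i + 1) (j + 1) * u (i + 2) (j + 2) - u (i + 1) (j + 2) * u (i + 2) (j + 1))
        - u i (j + 1) * (u (i + 1) j * u (i + 2) (j + 2) - u (i + 1) (j + 2) * u (i + 2) j)
        + u i (j + 2) * (u (i + 1) j * u (i + 2) (j + 1) - u (i + 1) (j + 1) * u (i + 2) j)
      = 0)
    (hper : ∀ i j : ℤ, u i j = u (i + m) (j + n)) :
    ∃ g : ℤ, 0 < g ∧ ∀ i j : ℤ, u (i + m) j + u i (j + n) = g * u i j :=
  sl2_tiling_growth_general u m n hpos hsl2 hper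
end

section
/- Let a/b and c/d be reduced fractions with a*d - b*c not equal to 0, and suppose there is a Farey edge {b1/b2, d1/d2} (so |b1*d2 - b2*d1| = 1) such that the four points a/b, b1/b2, c/d, d1/d2 lie in this cyclic order on the circle, with all the determinants det(a,b1), det(c,d1), det(a,d1), det(b1,c) positive integers. Then det(a,c) = det(a,b1)*det(c,d1) + det(a,d1)*det(b1,c) >= det(a,b1) + 1. -/
def det2 (x y : ℤ × ℤ) : ℤ := x.1 * y.2 - x.2 * y.1

theorem det2_mul_det2_eq_add (a b c d : ℤ × ℤ) :
    det2 a c * det2 b d = det2 a b * det2 c d + det2 a d * det2 b c := by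
  simp only [det2]
  ring

theorem farey_inductive_step_general (a b1 c d1 : ℤ × ℤ)
    (hedge : det2 b1 d1 = 1)
    (h1 : 0 < det2 a b1) (h2 : 0 < det2 c d1)
    (h3 : 0 < det2 a d1) (h4 : 0 < det2 b1 c) :
    det2 a c = det2 a b1 * det2 c d1 + det2 a d1 * det2 b1 c ∧
    det2 a b1 + 1 ≤ det2 a c := by
  have ptolemy := det2_mul_det2_eq_add a b1 c d1
  rw [hedge, mul_one] at ptolemy
  refine ⟨ptolemy, ?_⟩
  calc det2 a b1 + 1 = det2 a b1 * 1 + 1 * 1 := by ring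
    _ ≤ det2 a b1 * det2 c d1 + det2 a d1 * det2 b1 c := by gcongr <;> omega
    _ = det2 a c := ptolemy.symm

/-- Inductive step of Lemma on Farey determinants: if {b₁, d₁} is a Farey edge
(in the cyclic order a, b₁, c, d₁ on the circle, so det2 b₁ d₁ = 1) and the four
determinants det2 a b₁, det2 c d₁, det2 a d₁, det2 b₁ c are positive integers,
then det2 a c = det2 a b₁ * det2 c d₁ + det2 a d₁ * det2 b₁ c ≥ det2 a b₁ + 1. -/
theorem farey_inductive_step (a b1 c d1 : ℤ × ℤ)
    (hac : det2 a c ≠ 0)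
    (hedge : det2 b1 d1 = 1)
    (h1 : 0 < det2 a b1) (h2 : 0 < det2 c d1)
    (h3 : 0 < det2 a d1) (h4 : 0 < det2 b1 c) :
    det2 a c = det2 a b1 * det2 c d1 + det2 a d1 * det2 b1 c ∧
    det2 a b1 + 1 ≤ det2 a c :=
  farey_inductive_step_general a b1 c d1 hedge h1 h2 h3 h4
end

section
/- Let u_{i,j} be a tame bi-infinite matrix over a field with all adjacent 2x2 minors equal to 1, and suppose there exist indices i0 and a constant lambda such that u_{i0+1,j} = lambda*u_{i0,j} - u_{i0-1,j} for all j (the linear recurrence from tameness). If lambda = 1, then u_{i0,j} = u_{i0-1,j} + u_{i0+1,j} for all j, and deleting row i0 from the matrix yields a matrix that still has all adjacent 2x2 minors equal to 1. -/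
/-! Rows `x, y, z` with `z = λ y - x` satisfy `det(x, z) = λ det(x, y)` column by column, so for
`λ = 1` the rows `i₀ - 1` and `i₀ + 1` that become adjacent after deleting row `i₀` again have
all adjacent minors equal to `1`. Every other adjacent pair of the new matrix was already adjacent. -/

theorem adjacent_minor_of_recurrence {K : Type*} [CommRing K] (x y z : ℤ → K) (lam : K)
    (hz : ∀ j, z j = lam * y j - x j) (j : ℤ) :
    x j * z (j + 1) - x (j + 1) * z j = lam * (x j * y (j + 1) - x (j + 1) * y j) := by
  rw [hz, hz]
  ring

/-- Row removal in a tame SL₂-tiling over a field: if row i₀ satisfies the linear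
recurrence with λ = 1, i.e. u_{i₀,j} = u_{i₀-1,j} + u_{i₀+1,j}, then deleting row
i₀ preserves the SL₂ condition on adjacent 2×2 minors. -/
theorem row_removal_lambda_one {K : Type*} [Field K] (u : ℤ → ℤ → K)
    (hsl2 : ∀ i j : ℤ, u i j * u (i + 1) (j + 1) - u i (j + 1) * u (i + 1) j = 1)
    (i0 : ℤ) (lam : K)
    (hrec : ∀ j : ℤ, u (i0 + 1) j = lam * u i0 j - u (i0 - 1) j)
    (hlam : lam = 1)
    (u' : ℤ → ℤ → K)
    (hu' : ∀ i j : ℤ, u' i j = if i < i0 then u i j else u (i + 1) j) :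
    (∀ j : ℤ, u i0 j = u (i0 - 1) j + u (i0 + 1) j) ∧
    (∀ i j : ℤ, u' i j * u' (i + 1) (j + 1) - u' i (j + 1) * u' (i + 1) j = 1) := by
  subst hlam
  refine ⟨fun j => by rw [hrec j]; ring, fun i j => ?_⟩
  simp only [hu']
  rcases lt_trichotomy (i + 1) i0 with h | rfl | h
  · simp only [if_pos (by omega : i < i0), if_pos h]
    exact hsl2 i j
  · simp only [lt_add_one i, lt_irrefl, if_true, if_false]
    rw [adjacent_minor_of_recurrence (u i) (u (i + 1)) (u (i + 1 + 1)) 1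
      (by simpa using hrec), one_mul]
    exact hsl2 i j
  · simp only [if_neg (by omega : ¬ i < i0), if_neg (by omega : ¬ i + 1 < i0)]
    exact hsl2 (i + 1) j
end

section
/- Let (u_{i,j}) be a tame SL_2-tiling of positive integers that is (m,n)-periodic (u_{i,j} = u_{i+m,j+n}, m,n > 0). Define a_i = (u_{i-1,j0} + u_{i+1,j0}) / u_{i,j0} for fixed j0. Then each a_i is a positive integer, a_i does not depend on j0, and a_{i+m} = a_i for all i. -/
def quiddityMinor {R : Type*} [CommRing R] (u : ℤ → ℤ → R) (i j : ℤ) : R :=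
  u (i - 1) j * u (i + 1) (j + 1) - u (i - 1) (j + 1) * u (i + 1) j

theorem quiddityMinor_add_add {R : Type*} [CommRing R] {u : ℤ → ℤ → R} {m n : ℤ}
    (hper : ∀ i j : ℤ, u i j = u (i + m) (j + n)) (i j : ℤ) :
    quiddityMinor u (i + m) (j + n) = quiddityMinor u i j := by
  unfold quiddityMinor
  rw [hper (i - 1) j, hper (i + 1) j, hper (i - 1) (j + 1), hper (i + 1) (j + 1)]
  ring_nf

namespace IsSL2Tiling

variable {R : Type*} [CommRing R] {u : ℤ → ℤ → R}

theorem add_eq_quiddityMinor_mul (h : IsSL2Tiling u) (i j : ℤ) :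
    u (i - 1) j + u (i + 1) j = quiddityMinor u i j * u i j := by
  have h₁ := h (i - 1) j
  rw [sub_add_cancel] at h₁
  unfold quiddityMinor
  linear_combination (-u (i + 1) j) * h₁ - u (i - 1) j * h i j

theorem add_eq_quiddityMinor_mul_succ (h : IsSL2Tiling u) (i j : ℤ) :
    u (i - 1) (j + 1) + u (i + 1) (j + 1) = quiddityMinor u i j * u i (j + 1) := by
  have h₁ := h (i - 1) j
  rw [sub_add_cancel] at h₁
  unfold quiddityMinor
  linear_combination (-u (i + 1) (j + 1)) * h₁ - u (i - 1) (j + 1) * h i j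

theorem quiddityMinor_succ [IsDomain R] (h : IsSL2Tiling u) (hu : ∀ i j, u i j ≠ 0)
    (i j : ℤ) : quiddityMinor u i (j + 1) = quiddityMinor u i j :=
  mul_right_cancel₀ (hu i (j + 1)) <| by
    rw [← h.add_eq_quiddityMinor_mul, h.add_eq_quiddityMinor_mul_succ]

theorem quiddityMinor_eq_quiddityMinor_zero [IsDomain R] (h : IsSL2Tiling u)
    (hu : ∀ i j, u i j ≠ 0) (i j : ℤ) : quiddityMinor u i j = quiddityMinor u i 0 := by
  have hperiodic : Function.Periodic (quiddityMinor u i) 1 := h.quiddityMinor_succ hu i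
  simpa using hperiodic.int_mul_eq j

end IsSL2Tiling

theorem sl2_tiling_quiddity_general (u : ℤ → ℤ → ℤ) (m n : ℤ)
    (hpos : ∀ i j : ℤ, 0 < u i j)
    (hsl2 : ∀ i j : ℤ, u i j * u (i + 1) (j + 1) - u i (j + 1) * u (i + 1) j = 1)
    (hper : ∀ i j : ℤ, u i j = u (i + m) (j + n)) :
    ∃ a : ℤ → ℤ,
      (∀ i : ℤ, 0 < a i) ∧
      (∀ i j : ℤ, u (i - 1) j + u (i + 1) j = a i * u i j) ∧
      (∀ i : ℤ, a (i + m) = a i) := by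
  have h : IsSL2Tiling u := hsl2
  have hu : ∀ i j, u i j ≠ 0 := fun i j => (hpos i j).ne'
  refine ⟨fun i => quiddityMinor u i 0, fun i => ?_, fun i j => ?_, fun i => ?_⟩
  · refine pos_of_mul_pos_left ?_ (hpos i 0).le
    rw [← h.add_eq_quiddityMinor_mul]
    exact add_pos (hpos _ _) (hpos _ _)
  · rw [h.add_eq_quiddityMinor_mul, h.quiddityMinor_eq_quiddityMinor_zero hu]
  · dsimp only
    rw [← h.quiddityMinor_eq_quiddityMinor_zero hu (i + m) (0 + n), quiddityMinor_add_add hper]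

/-- Quiddity sequence of an (m,n)-periodic tame positive integral SL₂-tiling:
a_i = (u_{i-1,j} + u_{i+1,j}) / u_{i,j} is a positive integer, independent of the
column j, and m-periodic in i. -/
theorem sl2_tiling_quiddity (u : ℤ → ℤ → ℤ) (m n : ℤ) (hm : 0 < m) (hn : 0 < n)
    (hpos : ∀ i j : ℤ, 0 < u i j)
    (hsl2 : ∀ i j : ℤ, u i j * u (i + 1) (j + 1) - u i (j + 1) * u (i + 1) j = 1)
    (htame : ∀ i j : ℤ,
      u i j * (u (i + 1) (j + 1) * u (i + 2) (j + 2) - u (i + 1) (j + 2) * u (i + 2) (j + 1))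
        - u i (j + 1) * (u (i + 1) j * u (i + 2) (j + 2) - u (i + 1) (j + 2) * u (i + 2) j)
        + u i (j + 2) * (u (i + 1) j * u (i + 2) (j + 1) - u (i + 1) (j + 1) * u (i + 2) j)
      = 0)
    (hper : ∀ i j : ℤ, u i j = u (i + m) (j + n)) :
    ∃ a : ℤ → ℤ,
      (∀ i : ℤ, 0 < a i) ∧
      (∀ i j : ℤ, u (i - 1) j + u (i + 1) j = a i * u i j) ∧
      (∀ i : ℤ, a (i + m) = a i) :=
  sl2_tiling_quiddity_general u m n hpos hsl2 hper
end
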